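/- If G is a claw-free graph and X ⊆ V(G) induces a triangle-free subgraph, then |X| ≤ 5·γ(G). -/

import Mathlib

open Finset

variable {V : Type*}

/-- A finset is independent in `G` : no two of its vertices are adjacent. -/
def IsIndepFinset (G : SimpleGraph V) (S : Finset V) : Prop :=
  ∀ u ∈ S, ∀ v ∈ S, ¬ G.Adj u v

/-- A finset dominates `G` : every vertex outside it has a neighbour inside it. -/
def IsDomFinset (G : SimpleGraph V) (D : Finset V) : Prop :=
  ∀ v, v ∉ D → ∃ u ∈ D, G.Adj u v

/-- The independence number of `G`. -/
noncomputable def indepNum [Fintype V] (G : SimpleGraph V) : ℕ :=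
  sSup {n | ∃ S : Finset V, IsIndepFinset G S ∧ S.card = n}

/-- The domination number of `G`. -/
noncomputable def domNum [Fintype V] (G : SimpleGraph V) : ℕ :=
  sInf {n | ∃ D : Finset V, IsDomFinset G D ∧ D.card = n}

/-- `G` is `K_{1,r}`-free: no vertex has `r` pairwise nonadjacent neighbours. -/
def K1rFree (G : SimpleGraph V) (r : ℕ) : Prop :=
  ¬ ∃ (v : V) (A : Finset V), (∀ a ∈ A, G.Adj v a) ∧
      (∀ a ∈ A, ∀ b ∈ A, a ≠ b → ¬ G.Adj a b) ∧ A.card = r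

/-!
Take a minimum dominating set `D`; the closed neighbourhoods of its vertices cover `X`. Each
`X ∩ N[d]` has no triangle, since `X` is triangle-free, and no independent triple: one avoiding
`d` would be a claw at `d`, and `d` is adjacent to everything else in `N[d]`. By `R(3,3) = 6`
such a set has at most five vertices, so `|X| ≤ 5 |D|`.
-/

namespace SimpleGraph

lemma card_filter_adj_le_two_of_cliqueFreeOn {H : SimpleGraph V} {S : Finset V}
    (hH : H.CliqueFreeOn S 3) (hHc : Hᶜ.CliqueFreeOn S 3) {v : V} (hv : v ∈ S)
    [DecidablePred (H.Adj v)] : #(S.filter (H.Adj v)) ≤ 2 := by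
  by_contra! h3
  obtain ⟨t, hts, ht⟩ := exists_subset_card_eq (Nat.succ_le_of_lt h3)
  have hnbrs : (↑(S.filter (H.Adj v)) : Set V) ⊆ ↑S ∩ H.neighborSet v := fun x hx => by
    simpa using hx
  have hindep := (cliqueFreeOn_two H).1 ((hH.of_succ _ hv).subset _ hnbrs)
  refine hHc (hts.trans (filter_subset _ _)) ⟨fun a ha b hb hab => ?_, ht⟩
  exact (compl_adj H a b).2 ⟨hab, hindep (hts ha) (hts hb) hab⟩

/-- The Ramsey bound `R(3,3) ≤ 6`. -/
lemma card_le_five_of_cliqueFreeOn_of_compl_cliqueFreeOn {H : SimpleGraph V} {S : Finset V}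
    (hH : H.CliqueFreeOn S 3) (hHc : Hᶜ.CliqueFreeOn S 3) : #S ≤ 5 := by
  classical
  obtain rfl | ⟨v, hv⟩ := S.eq_empty_or_nonempty
  · simp
  have hsplit : S.erase v ⊆ S.filter (H.Adj v) ∪ S.filter (Hᶜ.Adj v) := fun x hx => by
    obtain ⟨hxv, hxS⟩ := mem_erase.1 hx
    by_cases hadj : H.Adj v x <;> simp [hxS, hadj, hxv.symm]
  have hnbrs := card_filter_adj_le_two_of_cliqueFreeOn hH hHc hv
  have hnonnbrs := card_filter_adj_le_two_of_cliqueFreeOn hHc (by rwa [compl_compl]) hv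
  have := (card_le_card hsplit).trans (card_union_le _ _)
  rw [card_erase_of_mem hv] at this
  omega

lemma cliqueFreeOn_three_of_triangleFree {G : SimpleGraph V} {X : Finset V}
    (hX : ∀ a ∈ X, ∀ b ∈ X, ∀ c ∈ X, G.Adj a b → G.Adj b c → ¬ G.Adj a c) :
    G.CliqueFreeOn X 3 := by
  classical
  intro t ht htri
  obtain ⟨a, b, c, -, -, -, rfl⟩ := card_eq_three.1 htri.card_eq
  obtain ⟨hab, hac, hbc⟩ := is3Clique_triple_iff.1 htri
  exact hX a (ht (by simp)) b (ht (by simp)) c (ht (by simp)) hab hbc hac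

lemma compl_cliqueFreeOn_closedNbhd_of_clawFree {G : SimpleGraph V} (hG : K1rFree G 3) (d : V) :
    Gᶜ.CliqueFreeOn (insert d (G.neighborSet d)) 3 := by
  classical
  intro t ht hindep
  by_cases hdt : d ∈ t
  · obtain ⟨a, ha⟩ : (t.erase d).Nonempty := by
      rw [← card_pos, card_erase_of_mem hdt, hindep.card_eq]; decide
    obtain ⟨had, hat⟩ := mem_erase.1 ha
    have hda : G.Adj d a := by simpa [had] using ht hat
    exact ((compl_adj G d a).1 (hindep.isClique hdt hat had.symm)).2 hda
  · refine hG ⟨d, t, fun a ha => ?_, fun a ha b hb hab => ?_, hindep.card_eq⟩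
    · simpa [show a ≠ d by rintro rfl; exact hdt ha] using ht ha
    · exact ((compl_adj G a b).1 (hindep.isClique ha hb hab)).2

end SimpleGraph

open SimpleGraph

lemma IsDomFinset.card_le_mul_card [DecidableEq V] {G : SimpleGraph V} [DecidableRel G.Adj]
    {D : Finset V} (hD : IsDomFinset G D) (X : Finset V) {k : ℕ}
    (hk : ∀ d ∈ D, #(X.filter (fun x => x = d ∨ G.Adj d x)) ≤ k) : #X ≤ k * #D := by
  have hcover : X ⊆ D.biUnion (fun d => X.filter (fun x => x = d ∨ G.Adj d x)) := by
    intro x hx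
    by_cases hxD : x ∈ D
    · exact mem_biUnion.2 ⟨x, hxD, mem_filter.2 ⟨hx, .inl rfl⟩⟩
    · obtain ⟨d, hd, hdx⟩ := hD x hxD
      exact mem_biUnion.2 ⟨d, hd, mem_filter.2 ⟨hx, .inr hdx⟩⟩
  calc #X ≤ ∑ d ∈ D, #(X.filter (fun x => x = d ∨ G.Adj d x)) :=
        (card_le_card hcover).trans card_biUnion_le
    _ ≤ ∑ _d ∈ D, k := sum_le_sum hk
    _ = k * #D := by rw [sum_const, smul_eq_mul, mul_comm]

lemma exists_isDomFinset_card_eq_domNum [Fintype V] (G : SimpleGraph V) :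
    ∃ D : Finset V, IsDomFinset G D ∧ #D = domNum G :=
  Nat.sInf_mem (s := {n | ∃ D : Finset V, IsDomFinset G D ∧ D.card = n})
    ⟨#(univ : Finset V), univ, fun v hv => absurd (mem_univ v) hv, rfl⟩

/-- In a claw-free graph, a vertex set inducing a triangle-free subgraph has
size at most 5·γ(G). -/
theorem stmt13 [Fintype V] (G : SimpleGraph V) (hG : K1rFree G 3)
    (X : Finset V)
    (hX : ∀ a ∈ X, ∀ b ∈ X, ∀ c ∈ X, G.Adj a b → G.Adj b c → ¬ G.Adj a c) :
    X.card ≤ 5 * domNum G := by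
  classical
  obtain ⟨D, hD, hDcard⟩ := exists_isDomFinset_card_eq_domNum G
  rw [← hDcard]
  refine hD.card_le_mul_card X fun d _ => ?_
  have hsubX : (↑(X.filter (fun x => x = d ∨ G.Adj d x)) : Set V) ⊆ ↑X :=
    coe_subset.2 (filter_subset _ _)
  have hsubNbhd : (↑(X.filter (fun x => x = d ∨ G.Adj d x)) : Set V) ⊆
      insert d (G.neighborSet d) := fun x hx => by simpa using (mem_filter.1 hx).2
  exact card_le_five_of_cliqueFreeOn_of_compl_cliqueFreeOn
    ((cliqueFreeOn_three_of_triangleFree hX).subset _ hsubX)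
    ((compl_cliqueFreeOn_closedNbhd_of_clawFree hG d).subset _ hsubNbhd)
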